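/- arXiv:1601.03562 — 5 statements merged into one kernel-verified Lean document; each statement's English description precedes it below -/
import Mathlib

section
/- For every fixed c>0, the map u ↦ f(c,u) on the interval {u ∈ ℝ : (1−γ)u>0} is convex when γψ>1, and is strictly concave (in particular not convex) when γψ<1. -/
/-! With `k = 1 - γ`, `p = 1 - 1/θ` and `B = δ c^(1-1/ψ) / (1-1/ψ)`, the map is
`u ↦ B (k u)^p - δ θ u`. Its second derivative `B p (p-1) k² (k u)^(p-2)` has the sign of
`B p (p-1) k²`, and substituting `θ = k / (1 - 1/ψ)` turns this into `δ c^(1-1/ψ) (γ - 1/ψ)`,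
whose sign is that of `γψ - 1`. -/

section ScaledRpow

variable (B k p d : ℝ)

lemma isOpen_setOf_pos_mul : IsOpen {u : ℝ | 0 < k * u} :=
  isOpen_lt continuous_const (continuous_const_mul k)

lemma convex_setOf_pos_mul : Convex ℝ {u : ℝ | 0 < k * u} :=
  (convex_Ioi 0).linear_preimage (LinearMap.mul ℝ ℝ k)

lemma nontrivial_setOf_pos_mul {k : ℝ} (hk : k ≠ 0) : {u : ℝ | 0 < k * u}.Nontrivial :=
  ⟨1 / k, by simp [hk], 2 / k, by simp [mul_div_cancel₀ _ hk],
    by rw [Ne, div_left_inj' hk]; norm_num⟩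

lemma hasDerivAt_const_mul_rpow_mul {x : ℝ} (hx : k * x ≠ 0) :
    HasDerivAt (fun u => B * (k * u) ^ p) (B * p * k * (k * x) ^ (p - 1)) x := by
  have := (((hasDerivAt_id' x).const_mul k).rpow_const (p := p) (Or.inl hx)).const_mul B
  rwa [show B * p * k * (k * x) ^ (p - 1) = B * (k * 1 * p * (k * x) ^ (p - 1)) by ring]

lemma deriv2_const_mul_rpow_mul {x : ℝ} (hx : 0 < k * x) :
    deriv^[2] (fun u => B * (k * u) ^ p) x = B * p * (p - 1) * k ^ 2 * (k * x) ^ (p - 2) := by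
  have hderiv : deriv (fun u => B * (k * u) ^ p) =ᶠ[nhds x]
      fun u => B * p * k * (k * u) ^ (p - 1) := by
    filter_upwards [(isOpen_setOf_pos_mul k).mem_nhds hx] with y hy
    exact (hasDerivAt_const_mul_rpow_mul B k p (ne_of_gt hy)).deriv
  rw [Function.iterate_succ_apply, Function.iterate_one, hderiv.deriv_eq,
    (hasDerivAt_const_mul_rpow_mul (B * p * k) k (p - 1) hx.ne').deriv]
  ring_nf

lemma continuousOn_const_mul_rpow_mul :
    ContinuousOn (fun u => B * (k * u) ^ p) {u : ℝ | 0 < k * u} := fun _ hx =>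
  (hasDerivAt_const_mul_rpow_mul B k p (ne_of_gt hx)).continuousAt.continuousWithinAt

lemma strictConvexOn_const_mul_rpow_mul_sub_mul (h : 0 < B * p * (p - 1) * k ^ 2) :
    StrictConvexOn ℝ {u : ℝ | 0 < k * u} (fun u => B * (k * u) ^ p - d * u) :=
  (strictConvexOn_of_deriv2_pos' (convex_setOf_pos_mul k)
      (continuousOn_const_mul_rpow_mul B k p) fun x hx => by
    rw [deriv2_const_mul_rpow_mul B k p hx]
    exact mul_pos h (Real.rpow_pos_of_pos hx _)).sub_concaveOn
    ((LinearMap.mul ℝ ℝ d).concaveOn (convex_setOf_pos_mul k))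

lemma strictConcaveOn_const_mul_rpow_mul_sub_mul (h : B * p * (p - 1) * k ^ 2 < 0) :
    StrictConcaveOn ℝ {u : ℝ | 0 < k * u} (fun u => B * (k * u) ^ p - d * u) :=
  (strictConcaveOn_of_deriv2_neg' (convex_setOf_pos_mul k)
      (continuousOn_const_mul_rpow_mul B k p) fun x hx => by
    rw [deriv2_const_mul_rpow_mul B k p hx]
    exact mul_neg_of_neg_of_pos h (Real.rpow_pos_of_pos hx _)).sub_convexOn
    ((LinearMap.mul ℝ ℝ d).convexOn (convex_setOf_pos_mul k))

end ScaledRpow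

lemma StrictConcaveOn.not_convexOn {𝕜 E β : Type*} [Field 𝕜] [LinearOrder 𝕜]
    [IsStrictOrderedRing 𝕜] [AddCommMonoid E] [SMul 𝕜 E] [AddCommMonoid β] [PartialOrder β]
    [SMul 𝕜 β] {s : Set E} {f : E → β} (hf : StrictConcaveOn 𝕜 s f) (hs : s.Nontrivial) :
    ¬ ConvexOn 𝕜 s f := fun hf' => by
  obtain ⟨x, hx, y, hy, hxy⟩ := hs
  have hhalf : (0 : 𝕜) < 1 / 2 := by positivity
  exact (hf.2 hx hy hxy hhalf hhalf (add_halves 1)).not_ge (hf'.2 hx hy hhalf.le hhalf.le (add_halves 1))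

lemma curvature_coeff_eq {a k : ℝ} (ha : a ≠ 0) (hk : k ≠ 0) (δ X : ℝ) :
    δ * (X / a) * (1 - 1 / (k / a)) * ((1 - 1 / (k / a)) - 1) * k ^ 2 = δ * X * (a - k) := by
  field_simp
  ring

theorem epsteinZin_aggregator_convexity_in_u_general
    (δ γ ψ θ : ℝ) (hδ : 0 < δ) (hγ1 : γ ≠ 1)
    (hψ : 0 < ψ) (hψ1 : ψ ≠ 1) (hθ : θ = (1 - γ) / (1 - 1 / ψ))
    (c : ℝ) (hc : 0 < c) :
    (1 < γ * ψ →
      ConvexOn ℝ {u : ℝ | 0 < (1 - γ) * u}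
        (fun u : ℝ =>
          δ * (c ^ (1 - 1 / ψ) / (1 - 1 / ψ)) * ((1 - γ) * u) ^ (1 - 1 / θ)
            - δ * θ * u)) ∧
    (γ * ψ < 1 →
      StrictConcaveOn ℝ {u : ℝ | 0 < (1 - γ) * u}
        (fun u : ℝ =>
          δ * (c ^ (1 - 1 / ψ) / (1 - 1 / ψ)) * ((1 - γ) * u) ^ (1 - 1 / θ)
            - δ * θ * u) ∧
      ¬ ConvexOn ℝ {u : ℝ | 0 < (1 - γ) * u}
        (fun u : ℝ =>
          δ * (c ^ (1 - 1 / ψ) / (1 - 1 / ψ)) * ((1 - γ) * u) ^ (1 - 1 / θ)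
            - δ * θ * u)) := by
  have hk : 1 - γ ≠ 0 := sub_ne_zero.2 (Ne.symm hγ1)
  have ha : 1 - 1 / ψ ≠ 0 := sub_ne_zero.2 fun h => hψ1 (by simpa using h.symm)
  have hcoeff : δ * (c ^ (1 - 1 / ψ) / (1 - 1 / ψ)) * (1 - 1 / θ) * ((1 - 1 / θ) - 1)
      * (1 - γ) ^ 2 = δ * c ^ (1 - 1 / ψ) * (γ - 1 / ψ) := by
    rw [hθ, curvature_coeff_eq ha hk]
    ring
  have hscale : 0 < δ * c ^ (1 - 1 / ψ) := mul_pos hδ (Real.rpow_pos_of_pos hc _)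
  refine ⟨fun hγψ => (strictConvexOn_const_mul_rpow_mul_sub_mul _ _ _ _ ?_).convexOn,
    fun hγψ => ?_⟩
  · rw [hcoeff]
    exact mul_pos hscale (sub_pos.2 ((div_lt_iff₀ hψ).2 (by linarith)))
  · have hconcave := strictConcaveOn_const_mul_rpow_mul_sub_mul
      (δ * (c ^ (1 - 1 / ψ) / (1 - 1 / ψ))) (1 - γ) (1 - 1 / θ) (δ * θ) (by
        rw [hcoeff]
        exact mul_neg_of_pos_of_neg hscale (sub_neg.2 ((lt_div_iff₀ hψ).2 (by linarith))))
    exact ⟨hconcave, hconcave.not_convexOn (nontrivial_setOf_pos_mul hk)⟩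

/-- For every fixed `c > 0`, the map `u ↦ f(c,u)` on `{u | (1−γ)u > 0}` is convex
when `γψ > 1`, and strictly concave (in particular not convex) when `γψ < 1`. -/
theorem epsteinZin_aggregator_convexity_in_u
    (δ γ ψ θ : ℝ) (hδ : 0 < δ) (hγ : 0 < γ) (hγ1 : γ ≠ 1)
    (hψ : 0 < ψ) (hψ1 : ψ ≠ 1) (hθ : θ = (1 - γ) / (1 - 1 / ψ))
    (c : ℝ) (hc : 0 < c) :
    (1 < γ * ψ →
      ConvexOn ℝ {u : ℝ | 0 < (1 - γ) * u}
        (fun u : ℝ =>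
          δ * (c ^ (1 - 1 / ψ) / (1 - 1 / ψ)) * ((1 - γ) * u) ^ (1 - 1 / θ)
            - δ * θ * u)) ∧
    (γ * ψ < 1 →
      StrictConcaveOn ℝ {u : ℝ | 0 < (1 - γ) * u}
        (fun u : ℝ =>
          δ * (c ^ (1 - 1 / ψ) / (1 - 1 / ψ)) * ((1 - γ) * u) ^ (1 - 1 / θ)
            - δ * θ * u) ∧
      ¬ ConvexOn ℝ {u : ℝ | 0 < (1 - γ) * u}
        (fun u : ℝ =>
          δ * (c ^ (1 - 1 / ψ) / (1 - 1 / ψ)) * ((1 - γ) * u) ^ (1 - 1 / θ)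
            - δ * θ * u)) :=
  epsteinZin_aggregator_convexity_in_u_general δ γ ψ θ hδ hγ1 hψ hψ1 hθ c hc
end

section
/- Assume γψ>1. For every c>0 and every ν ∈ ℝ with (δθ−ν)/(θ−1)>0, the infimum F(c,ν) := inf { f(c,u) + ν·u : u ∈ ℝ, (1−γ)u>0 } is attained and equals δ^θ · (c^{1−γ}/(1−γ)) · ((δθ−ν)/(θ−1))^{1−θ}. -/
/-!
Substitute `x = (1 - γ) u`, `a = 1 - 1/ψ`, `p = 1 - 1/θ`, `k = (δθ - ν)/(θ - 1)`. Since `θ a = 1 - γ`,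
the objective becomes `(δ c^a x^p - p k x) / a`. The condition `γψ > 1` forces `p ∉ (0, 1)` when
`a > 0` and `p ∈ [0, 1]` when `a < 0`, so in both cases the objective is convex in `x`; it is then
bounded below by its value at the critical point `x = (δ c^a / k)^θ`, by the tangent-line
(Bernoulli) inequality for `x ↦ x^p` there.
-/

open Real Set

lemma one_add_mul_self_le_rpow_one_add_of_nonpos {s p : ℝ} (hs : -1 < s) (hp : p ≤ 0) :
    1 + p * s ≤ (1 + s) ^ p := by
  have hs1 : 0 < 1 + s := by linarith
  have hlog : log (1 + s) ≤ s := by linarith [log_le_sub_one_of_pos hs1]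
  calc 1 + p * s ≤ 1 + p * log (1 + s) := by nlinarith
    _ ≤ exp (log (1 + s) * p) := by linarith [add_one_le_exp (log (1 + s) * p)]
    _ = (1 + s) ^ p := (rpow_def_of_pos hs1 p).symm

lemma rpow_tangent_line_le {x m p : ℝ} (hx : 0 < x) (hm : 0 < m) (hp : p ≤ 0 ∨ 1 ≤ p) :
    m ^ p + p * m ^ (p - 1) * (x - m) ≤ x ^ p := by
  have hs : -1 < x / m - 1 := by linarith [div_pos hx hm]
  have hbern : 1 + p * (x / m - 1) ≤ (1 + (x / m - 1)) ^ p := by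
    rcases hp with hp | hp
    · exact one_add_mul_self_le_rpow_one_add_of_nonpos hs hp
    · exact one_add_mul_self_le_rpow_one_add hs.le hp
  rw [add_sub_cancel, div_rpow hx.le hm.le] at hbern
  have hmp : 0 < m ^ p := rpow_pos_of_pos hm p
  rw [rpow_sub_one hm.ne']
  calc m ^ p + p * (m ^ p / m) * (x - m) = m ^ p * (1 + p * (x / m - 1)) := by
        field_simp
    _ ≤ m ^ p * (x ^ p / m ^ p) := mul_le_mul_of_nonneg_left hbern hmp.le
    _ = x ^ p := by field_simp

lemma rpow_le_tangent_line {x m p : ℝ} (hx : 0 < x) (hm : 0 < m) (hp0 : 0 ≤ p) (hp1 : p ≤ 1) :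
    x ^ p ≤ m ^ p + p * m ^ (p - 1) * (x - m) := by
  have hbern := rpow_one_add_le_one_add_mul_self (s := x / m - 1) (by linarith [div_pos hx hm])
    hp0 hp1
  rw [add_sub_cancel, div_rpow hx.le hm.le] at hbern
  have hmp : 0 < m ^ p := rpow_pos_of_pos hm p
  rw [rpow_sub_one hm.ne']
  calc x ^ p = m ^ p * (x ^ p / m ^ p) := by field_simp
    _ ≤ m ^ p * (1 + p * (x / m - 1)) := mul_le_mul_of_nonneg_left hbern hmp.le
    _ = m ^ p + p * (m ^ p / m) * (x - m) := by field_simp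

lemma isLeast_image_rpow_sub_mul_div {A k a p : ℝ} (hA : 0 < A) (hk : 0 < k) (hp : p ≠ 1)
    (hshape : (0 < a ∧ (p ≤ 0 ∨ 1 ≤ p)) ∨ (a < 0 ∧ 0 ≤ p ∧ p ≤ 1)) :
    IsLeast ((fun x => (A * x ^ p - p * k * x) / a) '' Ioi 0)
      ((1 - p) * k * (A / k) ^ (1 - p)⁻¹ / a) := by
  set m := (A / k) ^ (1 - p)⁻¹
  have hm : 0 < m := by positivity
  have hcrit : A * m ^ (p - 1) = k := by
    have : (1 - p)⁻¹ * (p - 1) = -1 := by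
      field_simp [sub_ne_zero.2 hp.symm]; ring
    rw [← rpow_mul (by positivity), this, rpow_neg_one, inv_div]
    field_simp
  have hval : (A * m ^ p - p * k * m) / a = (1 - p) * k * m / a := by
    rw [← hcrit, show m ^ p = m ^ (p - 1) * m by rw [rpow_sub_one hm.ne']; field_simp]
    ring
  refine ⟨⟨m, hm, hval⟩, ?_⟩
  rintro _ ⟨x, hx, rfl⟩
  rw [← hval, ← hcrit]
  rcases hshape with ⟨ha, hp⟩ | ⟨ha, hp0, hp1⟩
  · have := rpow_tangent_line_le hx hm hp
    apply div_le_div_of_nonneg_right _ ha.le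
    nlinarith
  · have := rpow_le_tangent_line hx hm hp0 hp1
    apply div_le_div_of_nonpos_of_le ha.le
    nlinarith

lemma epsteinZin_exponent_shape {γ ψ θ : ℝ} (hψ : 0 < ψ) (hψ1 : ψ ≠ 1)
    (hθ : θ = (1 - γ) / (1 - 1 / ψ)) (hγψ : 1 < γ * ψ) :
    (0 < 1 - 1 / ψ ∧ (1 - 1 / θ ≤ 0 ∨ 1 ≤ 1 - 1 / θ)) ∨
      (1 - 1 / ψ < 0 ∧ 0 ≤ 1 - 1 / θ ∧ 1 - 1 / θ ≤ 1) := by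
  -- `γ ψ > 1` is exactly `1 - γ < 1 - 1 / ψ`, i.e. `θ < 1` if `ψ > 1` and `θ > 1` if `ψ < 1`
  have hγ : 1 / ψ < γ := by rw [div_lt_iff₀ hψ]; linarith
  rcases hψ1.lt_or_gt with hψ1 | hψ1
  · have ha : 1 - 1 / ψ < 0 := by linarith [(one_lt_div hψ).2 hψ1]
    have hθ1 : 1 < θ := by rw [hθ, lt_div_iff_of_neg ha]; linarith
    have : 1 / θ ≤ 1 := (div_le_one (by linarith)).2 hθ1.le
    exact .inr ⟨ha, by linarith, by linarith [one_div_pos.2 (zero_lt_one.trans hθ1)]⟩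
  · have ha : 0 < 1 - 1 / ψ := by linarith [(div_lt_one hψ).2 hψ1]
    have hθ1 : θ < 1 := by rw [hθ, div_lt_iff₀ ha]; linarith
    refine .inl ⟨ha, ?_⟩
    rcases le_or_gt θ 0 with hθ0 | hθ0
    · exact .inr (by linarith [one_div_nonpos.2 hθ0])
    · exact .inl (by linarith [(one_lt_div hθ0).2 hθ1])

theorem epsteinZin_felicity_isLeast_general
    (δ γ ψ θ : ℝ) (hδ : 0 < δ) (hγ1 : γ ≠ 1)
    (hψ : 0 < ψ) (hψ1 : ψ ≠ 1) (hθ : θ = (1 - γ) / (1 - 1 / ψ))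
    (hγψ : 1 < γ * ψ)
    (c ν : ℝ) (hc : 0 < c) (hν : 0 < (δ * θ - ν) / (θ - 1)) :
    IsLeast
      {y : ℝ | ∃ u : ℝ, 0 < (1 - γ) * u ∧
        y = δ * (c ^ (1 - 1 / ψ) / (1 - 1 / ψ)) * ((1 - γ) * u) ^ (1 - 1 / θ)
              - δ * θ * u + ν * u}
      (δ ^ θ * (c ^ (1 - γ) / (1 - γ)) * ((δ * θ - ν) / (θ - 1)) ^ (1 - θ)) := by
  set a := 1 - 1 / ψ
  set k := (δ * θ - ν) / (θ - 1)
  have hshape := epsteinZin_exponent_shape hψ hψ1 hθ hγψ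
  have ha : a ≠ 0 := by rcases hshape with ⟨h, -⟩ | ⟨h, -⟩ <;> [exact h.ne'; exact h.ne]
  have hθa : θ * a = 1 - γ := by rw [hθ, div_mul_cancel₀ _ ha]
  have hθ0 : θ ≠ 0 := by rintro rfl; exact hγ1 (by linarith [hθa])
  -- for `θ = 1`, `k` would be the junk value `_ / 0 = 0`
  have hθ1 : θ - 1 ≠ 0 := fun h => by simp [k, h] at hν
  have hA : 0 < δ * c ^ a := by positivity
  have hobj (u : ℝ) : δ * (c ^ a / a) * ((1 - γ) * u) ^ (1 - 1 / θ) - δ * θ * u + ν * u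
      = (δ * c ^ a * ((1 - γ) * u) ^ (1 - 1 / θ) - (1 - 1 / θ) * k * ((1 - γ) * u)) / a := by
    generalize ((1 - γ) * u) ^ (1 - 1 / θ) = X
    rw [← hθa]
    field_simp
    linear_combination a * u * div_mul_cancel₀ (δ * θ - ν) hθ1
  convert isLeast_image_rpow_sub_mul_div (a := a) hA hν (by simpa using hθ0) hshape using 1
  · ext y
    constructor
    · rintro ⟨u, hu, rfl⟩
      exact ⟨(1 - γ) * u, hu, (hobj u).symm⟩
    · rintro ⟨x, hx, rfl⟩
      have hu : (1 - γ) * (x / (1 - γ)) = x := mul_div_cancel₀ _ (sub_ne_zero.2 hγ1.symm)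
      exact ⟨x / (1 - γ), by rwa [hu], by rw [hobj, hu]⟩
  · rw [sub_sub_cancel, one_div, inv_inv, div_rpow hA.le hν.le, mul_rpow hδ.le (by positivity),
      ← rpow_mul hc.le, mul_comm a, hθa, rpow_sub hν, rpow_one, ← hθa]
    field_simp

/-- Assume `γψ > 1`. For every `c > 0` and every `ν` with `(δθ−ν)/(θ−1) > 0`,
the infimum `F(c,ν) = inf { f(c,u) + νu : (1−γ)u > 0 }` is attained and equals
`δ^θ (c^{1−γ}/(1−γ)) ((δθ−ν)/(θ−1))^{1−θ}`. -/
theorem epsteinZin_felicity_isLeast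
    (δ γ ψ θ : ℝ) (hδ : 0 < δ) (hγ : 0 < γ) (hγ1 : γ ≠ 1)
    (hψ : 0 < ψ) (hψ1 : ψ ≠ 1) (hθ : θ = (1 - γ) / (1 - 1 / ψ))
    (hγψ : 1 < γ * ψ)
    (c ν : ℝ) (hc : 0 < c) (hν : 0 < (δ * θ - ν) / (θ - 1)) :
    IsLeast
      {y : ℝ | ∃ u : ℝ, 0 < (1 - γ) * u ∧
        y = δ * (c ^ (1 - 1 / ψ) / (1 - 1 / ψ)) * ((1 - γ) * u) ^ (1 - 1 / θ)
              - δ * θ * u + ν * u}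
      (δ ^ θ * (c ^ (1 - γ) / (1 - γ)) * ((δ * θ - ν) / (θ - 1)) ^ (1 - θ)) :=
  epsteinZin_felicity_isLeast_general δ γ ψ θ hδ hγ1 hψ hψ1 hθ hγψ c ν hc hν
end

section
/- Assume γψ>1. Define G(d,ν) := δ^{θ/γ} · (γ/(1−γ)) · d^{(γ−1)/γ} · ((δθ−ν)/(θ−1))^{(1−θ)/γ} for d>0 and ν ∈ ℝ with (δθ−ν)/(θ−1)>0. Then for every d>0 and every real v with (1−γ)v>0, the supremum g(d,v) := sup { G(d,ν) − ν·v : ν ∈ ℝ, (δθ−ν)/(θ−1)>0 } is attained and equals δ^ψ · (d^{1−ψ}/(ψ−1)) · ((1−γ)v)^{1−γψ/θ} − δθv. -/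
/-!
Substituting `w = (δθ - ν)/(θ - 1) > 0` turns the objective into
`A w^p - (1 - θ) v w - δθv` with `A = δ^{θ/γ} (γ/(1-γ)) d^{(γ-1)/γ}` and `p = (1 - θ)/γ`.
Since `γψ > 1`, `A p (p - 1) < 0`, so `w ↦ A w^p` is concave and lies below its tangent lines
(Bernoulli's inequality). The objective is therefore maximised where its derivative vanishes, at
`w = δ^ψ d^{1-ψ} ((1-γ)v)^{γ(ψ-1)/(γ-1)}`, and evaluating there gives the closed form.
-/

open Real

lemma one_add_mul_sub_one_le_rpow_of_nonpos {t p : ℝ} (ht : 0 < t) (hp : p ≤ 0) :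
    1 + p * (t - 1) ≤ t ^ p :=
  calc 1 + p * (t - 1) ≤ log t * p + 1 := by nlinarith [log_le_sub_one_of_pos ht]
    _ ≤ exp (log t * p) := add_one_le_exp _
    _ = t ^ p := (rpow_def_of_pos ht p).symm

/-- `c * t ^ p` is concave in `t > 0` when `c * p * (p - 1) ≤ 0`, so it lies below its tangent
at `t = 1`. -/
lemma mul_rpow_sub_mul_le {c p t : ℝ} (ht : 0 < t) (hcp : c * (p * (p - 1)) ≤ 0) :
    c * (t ^ p - p * t) ≤ c * (1 - p) := by
  have ht' : -1 ≤ t - 1 := by linarith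
  rcases lt_trichotomy c 0 with hc | rfl | hc
  · have hpp : 0 ≤ p * (p - 1) := nonneg_of_mul_nonpos_right hcp hc
    have hbern : 1 + p * (t - 1) ≤ t ^ p := by
      rcases le_or_gt p 0 with hp | hp
      · exact one_add_mul_sub_one_le_rpow_of_nonpos ht hp
      · simpa using one_add_mul_self_le_rpow_one_add ht' (by nlinarith)
    nlinarith
  · simp
  · have hpp : p * (p - 1) ≤ 0 := nonpos_of_mul_nonpos_right hcp hc
    have hbern : t ^ p ≤ 1 + p * (t - 1) := by
      simpa using rpow_one_add_le_one_add_mul_self ht' (by nlinarith) (by nlinarith)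
    nlinarith

lemma mul_rpow_sub_mul_le_of_slope {A p l u w : ℝ} (hu : 0 < u) (hw : 0 < w)
    (hconc : A * (p * (p - 1)) ≤ 0) (hslope : p * (A * u ^ p) = l * u) :
    A * w ^ p - l * w ≤ A * u ^ p - l * u := by
  obtain ⟨t, ht, rfl⟩ : ∃ t, 0 < t ∧ w = u * t :=
    ⟨w / u, div_pos hw hu, by field_simp⟩
  have key := mul_rpow_sub_mul_le (c := A * u ^ p) (p := p) ht
    (by nlinarith [rpow_pos_of_pos hu p])
  rw [mul_rpow hu.le ht.le]
  linear_combination key + (t - 1) * hslope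

namespace EpsteinZin

variable {γ ψ θ : ℝ}

lemma theta_eq (hψ : 0 < ψ) (hψ1 : ψ ≠ 1) (hθ : θ = (1 - γ) / (1 - 1 / ψ)) :
    θ = ψ * (1 - γ) / (ψ - 1) := by
  have : ψ - 1 ≠ 0 := sub_ne_zero.2 hψ1
  rw [hθ]
  field_simp

lemma theta_sub_one_ne_zero (hψ1 : ψ ≠ 1) (hθ : θ = ψ * (1 - γ) / (ψ - 1))
    (hγψ : 1 < γ * ψ) : θ - 1 ≠ 0 := by
  have : ψ - 1 ≠ 0 := sub_ne_zero.2 hψ1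
  rw [hθ, div_sub_one this]
  exact div_ne_zero (by linarith) this

lemma concavity_coeff_nonpos (hγ : 0 < γ) (hγ1 : γ ≠ 1) (hψ1 : ψ ≠ 1)
    (hθ : θ = ψ * (1 - γ) / (ψ - 1)) (hγψ : 1 < γ * ψ) :
    γ / (1 - γ) * ((1 - θ) / γ * ((1 - θ) / γ - 1)) ≤ 0 := by
  have : ψ - 1 ≠ 0 := sub_ne_zero.2 hψ1
  have : 1 - γ ≠ 0 := sub_ne_zero.2 hγ1.symm
  have h : γ / (1 - γ) * ((1 - θ) / γ * ((1 - θ) / γ - 1))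
      = -(γ * ψ - 1) / (γ * (ψ - 1) ^ 2) := by
    rw [hθ]; field_simp; ring
  rw [h]
  exact div_nonpos_of_nonpos_of_nonneg (by linarith) (by positivity)

variable {δ d v : ℝ}

lemma first_order_condition (hδ : 0 < δ) (hd : 0 < d) (hv : 0 < (1 - γ) * v) (hγ : 0 < γ)
    (hγ1 : γ ≠ 1) (hψ1 : ψ ≠ 1) (hθ : θ = ψ * (1 - γ) / (ψ - 1)) :
    δ ^ (θ / γ) * (γ / (1 - γ)) * d ^ ((γ - 1) / γ)
        * (δ ^ ψ * d ^ (1 - ψ) * ((1 - γ) * v) ^ (γ * (ψ - 1) / (γ - 1))) ^ ((1 - θ) / γ)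
      = γ * v * (δ ^ ψ * d ^ (1 - ψ) * ((1 - γ) * v) ^ (γ * (ψ - 1) / (γ - 1))) := by
  have : ψ - 1 ≠ 0 := sub_ne_zero.2 hψ1
  have : γ - 1 ≠ 0 := sub_ne_zero.2 hγ1
  have : 1 - γ ≠ 0 := sub_ne_zero.2 hγ1.symm
  have hδψ : δ ^ ψ = δ ^ (θ / γ) * δ ^ (ψ * ((1 - θ) / γ)) := by
    rw [← rpow_add hδ]; congr 1; rw [hθ]; field_simp; ring
  have hdψ : d ^ (1 - ψ) = d ^ ((γ - 1) / γ) * d ^ ((1 - ψ) * ((1 - θ) / γ)) := by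
    rw [← rpow_add hd]; congr 1; rw [hθ]; field_simp; ring
  have hq : γ * (ψ - 1) / (γ - 1) * ((1 - θ) / γ) = 1 + γ * (ψ - 1) / (γ - 1) := by
    rw [hθ]; field_simp; ring
  rw [mul_rpow (by positivity) (by positivity), mul_rpow (by positivity) (by positivity),
    ← rpow_mul hδ.le, ← rpow_mul hd.le, ← rpow_mul hv.le, hq, rpow_add hv, rpow_one,
    hδψ, hdψ]
  field_simp

lemma value_at_optimum (hv : 0 < (1 - γ) * v) (hψ : 0 < ψ) (hγ1 : γ ≠ 1) (hψ1 : ψ ≠ 1)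
    (hθ : θ = ψ * (1 - γ) / (ψ - 1)) :
    (γ + θ - 1) * v * (δ ^ ψ * d ^ (1 - ψ) * ((1 - γ) * v) ^ (γ * (ψ - 1) / (γ - 1)))
      = δ ^ ψ * (d ^ (1 - ψ) / (ψ - 1)) * ((1 - γ) * v) ^ (1 - γ * ψ / θ) := by
  have : ψ - 1 ≠ 0 := sub_ne_zero.2 hψ1
  have : γ - 1 ≠ 0 := sub_ne_zero.2 hγ1
  have : 1 - γ ≠ 0 := sub_ne_zero.2 hγ1.symm
  have hq : 1 - γ * ψ / θ = 1 + γ * (ψ - 1) / (γ - 1) := by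
    rw [hθ]; field_simp; ring
  rw [hq, rpow_add hv, rpow_one, hθ]
  field_simp
  ring

end EpsteinZin

/-- Assume `γψ > 1`. For every `d > 0` and every `v` with `(1−γ)v > 0`, the supremum
`g(d,v) = sup { G(d,ν) − νv : (δθ−ν)/(θ−1) > 0 }` is attained and equals
`δ^ψ (d^{1−ψ}/(ψ−1)) ((1−γ)v)^{1−γψ/θ} − δθv`. -/
theorem epsteinZin_dual_aggregator_isGreatest
    (δ γ ψ θ : ℝ) (hδ : 0 < δ) (hγ : 0 < γ) (hγ1 : γ ≠ 1)
    (hψ : 0 < ψ) (hψ1 : ψ ≠ 1) (hθ : θ = (1 - γ) / (1 - 1 / ψ))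
    (hγψ : 1 < γ * ψ)
    (d v : ℝ) (hd : 0 < d) (hv : 0 < (1 - γ) * v) :
    IsGreatest
      {y : ℝ | ∃ ν : ℝ, 0 < (δ * θ - ν) / (θ - 1) ∧
        y = δ ^ (θ / γ) * (γ / (1 - γ)) * d ^ ((γ - 1) / γ)
              * ((δ * θ - ν) / (θ - 1)) ^ ((1 - θ) / γ) - ν * v}
      (δ ^ ψ * (d ^ (1 - ψ) / (ψ - 1)) * ((1 - γ) * v) ^ (1 - γ * ψ / θ)
        - δ * θ * v) := by
  replace hθ := EpsteinZin.theta_eq hψ hψ1 hθ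
  have hθ1 := EpsteinZin.theta_sub_one_ne_zero hψ1 hθ hγψ
  have hfoc := EpsteinZin.first_order_condition hδ hd hv hγ hγ1 hψ1 hθ
  have hval := EpsteinZin.value_at_optimum (δ := δ) (d := d) hv hψ hγ1 hψ1 hθ
  set u := δ ^ ψ * d ^ (1 - ψ) * ((1 - γ) * v) ^ (γ * (ψ - 1) / (γ - 1))
  have hu : 0 < u := by positivity
  have hsubst : ∀ w, (δ * θ - (δ * θ - (θ - 1) * w)) / (θ - 1) = w := fun w => by
    field_simp; ring
  refine ⟨⟨δ * θ - (θ - 1) * u, by rwa [hsubst], ?_⟩, ?_⟩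
  · rw [hsubst, hfoc]
    linear_combination -hval
  rintro _ ⟨ν, hpos, rfl⟩
  obtain ⟨w, hw0, rfl⟩ : ∃ w, 0 < w ∧ ν = δ * θ - (θ - 1) * w :=
    ⟨_, hpos, by field_simp; ring⟩
  have hconc : δ ^ (θ / γ) * (γ / (1 - γ)) * d ^ ((γ - 1) / γ)
      * ((1 - θ) / γ * ((1 - θ) / γ - 1)) ≤ 0 := by
    have hA : 0 < δ ^ (θ / γ) * d ^ ((γ - 1) / γ) := by positivity
    nlinarith [EpsteinZin.concavity_coeff_nonpos hγ hγ1 hψ1 hθ hγψ]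
  have hslope := mul_rpow_sub_mul_le_of_slope (l := (1 - θ) * v) hu hw0 hconc
    (by rw [hfoc]; field_simp)
  rw [hsubst]
  linear_combination hslope + hfoc + hval
end

section
/- Fix γ>0, integers n,k ≥ 1, μ ∈ ℝ^n, an invertible matrix σ ∈ ℝ^{n×n}, ρ ∈ ℝ^{n×k}, and ρ⊥ ∈ ℝ^{n×n} with ρρᵀ + ρ⊥(ρ⊥)ᵀ = I_n; set Σ := σσᵀ. Then for every z ∈ ℝ^k, the minimum of (1/(2γ))(|ξ|² + |η|²) − (1/γ)·⟨ξ, z⟩ over all (ξ,η) ∈ ℝ^k × ℝ^n subject to the constraint μ + σρξ + σρ⊥η = 0 is attained at ξ* = z − ρᵀσᵀΣ^{−1}(μ + σρz), η* = −(ρ⊥)ᵀσᵀΣ^{−1}(μ + σρz) (which satisfy the constraint), and the minimal value equals (1/(2γ))[ (μ + σρz)ᵀΣ^{−1}(μ + σρz) − |z|² ]. -/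
open Matrix

lemma dot_self_nonneg' {m : ℕ} (v : Fin m → ℝ) : 0 ≤ v ⬝ᵥ v :=
  Finset.sum_nonneg fun _ _ => mul_self_nonneg _

lemma dot_transpose' {a b : ℕ} (M : Matrix (Fin a) (Fin b) ℝ) (u : Fin a → ℝ) (x : Fin b → ℝ) :
    Mᵀ.mulVec u ⬝ᵥ x = u ⬝ᵥ M.mulVec x := by
  calc Mᵀ.mulVec u ⬝ᵥ x = x ⬝ᵥ Mᵀ.mulVec u := dotProduct_comm _ _
    _ = x ᵥ* Mᵀ ⬝ᵥ u := dotProduct_mulVec _ _ _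
    _ = M.mulVec x ⬝ᵥ u := by rw [vecMul_transpose]
    _ = u ⬝ᵥ M.mulVec x := dotProduct_comm _ _

/-- Constrained minimization: the minimum of `(1/(2γ))(|ξ|²+|η|²) − (1/γ)⟨ξ,z⟩` over
`(ξ,η)` with `μ + σρξ + σρ⊥η = 0` is attained at
`ξ* = z − ρᵀσᵀΣ⁻¹(μ+σρz)`, `η* = −(ρ⊥)ᵀσᵀΣ⁻¹(μ+σρz)`, with minimal value
`(1/(2γ))[(μ+σρz)ᵀΣ⁻¹(μ+σρz) − |z|²]`. -/
theorem least_favorable_completion_min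
    (γ : ℝ) (hγ : 0 < γ) (n k : ℕ) (hn : 1 ≤ n) (hk : 1 ≤ k)
    (μ : Fin n → ℝ) (σ : Matrix (Fin n) (Fin n) ℝ) (hσ : IsUnit σ)
    (ρ : Matrix (Fin n) (Fin k) ℝ) (ρp : Matrix (Fin n) (Fin n) ℝ)
    (hρ : ρ * ρᵀ + ρp * ρpᵀ = 1) (z : Fin k → ℝ) :
    let S : Matrix (Fin n) (Fin n) ℝ := σ * σᵀ
    let w : Fin n → ℝ := μ + (σ * ρ).mulVec z
    let ξs : Fin k → ℝ := z - (ρᵀ * σᵀ * S⁻¹).mulVec w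
    let ηs : Fin n → ℝ := -(ρpᵀ * σᵀ * S⁻¹).mulVec w
    let mval : ℝ := (1 / (2 * γ)) * (w ⬝ᵥ S⁻¹.mulVec w - z ⬝ᵥ z)
    (μ + (σ * ρ).mulVec ξs + (σ * ρp).mulVec ηs = 0) ∧
    ((1 / (2 * γ)) * (ξs ⬝ᵥ ξs + ηs ⬝ᵥ ηs) - (1 / γ) * (ξs ⬝ᵥ z) = mval) ∧
    IsLeast
      {v : ℝ | ∃ ξ : Fin k → ℝ, ∃ η : Fin n → ℝ,
        μ + (σ * ρ).mulVec ξ + (σ * ρp).mulVec η = 0 ∧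
        v = (1 / (2 * γ)) * (ξ ⬝ᵥ ξ + η ⬝ᵥ η) - (1 / γ) * (ξ ⬝ᵥ z)} mval := by
  intro S w ξs ηs mval
  have hdet : IsUnit σ.det := (Matrix.isUnit_iff_isUnit_det σ).mp hσ
  have hSdet : IsUnit S.det := by
    show IsUnit (σ * σᵀ).det
    rw [Matrix.det_mul, Matrix.det_transpose]
    exact hdet.mul hdet
  have hSinv : S * S⁻¹ = 1 := Matrix.mul_nonsing_inv S hSdet
  have hσinv : σ⁻¹ * σ = 1 := Matrix.nonsing_inv_mul σ hdet
  have hS : S = σ * σᵀ := rfl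
  have hw : w = μ + (σ * ρ).mulVec z := rfl
  have hm : mval = (1 / (2 * γ)) * (w ⬝ᵥ S⁻¹.mulVec w - z ⬝ᵥ z) := rfl
  have hξs0 : ξs = z - (ρᵀ * σᵀ * S⁻¹).mulVec w := rfl
  have hηs0 : ηs = -((ρpᵀ * σᵀ * S⁻¹).mulVec w) := rfl
  clear_value S w ξs ηs mval
  set a : Fin n → ℝ := S⁻¹.mulVec w with ha
  set u : Fin n → ℝ := σᵀ.mulVec a with hu
  set r : Fin k → ℝ := ρᵀ.mulVec u with hr
  set q : Fin n → ℝ := ρpᵀ.mulVec u with hq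
  clear_value r q u a
  have hξs : ξs = z - r := by
    rw [hξs0, hr, hu, ha]
    simp only [Matrix.mulVec_mulVec]
    rw [Matrix.mul_assoc]
  have hηs : ηs = -q := by
    rw [hηs0, hq, hu, ha]
    simp only [Matrix.mulVec_mulVec]
    rw [Matrix.mul_assoc]
  have hσu : σ.mulVec u = w := by
    rw [hu, ha, Matrix.mulVec_mulVec, Matrix.mulVec_mulVec, ← hS, hSinv, Matrix.one_mulVec]
  have hsum : σ * ρ * ρᵀ + σ * ρp * ρpᵀ = σ := by
    rw [Matrix.mul_assoc, Matrix.mul_assoc, ← Matrix.mul_add, hρ, Matrix.mul_one]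
  -- constraint at the optimum
  have hcs : μ + (σ * ρ).mulVec ξs + (σ * ρp).mulVec ηs = 0 := by
    rw [hξs, hηs, Matrix.mulVec_sub, Matrix.mulVec_neg]
    have h1 : (σ * ρ).mulVec r + (σ * ρp).mulVec q = w := by
      rw [hr, hq, Matrix.mulVec_mulVec, Matrix.mulVec_mulVec, ← Matrix.add_mulVec, hsum, hσu]
    calc μ + ((σ * ρ).mulVec z - (σ * ρ).mulVec r) + -((σ * ρp).mulVec q)
        = (μ + (σ * ρ).mulVec z) - ((σ * ρ).mulVec r + (σ * ρp).mulVec q) := by abel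
      _ = w - w := by rw [h1, ← hw]
      _ = 0 := sub_self w
  -- dot product identities
  have e4 : ∀ x : Fin k → ℝ, ρ.mulVec x ⬝ᵥ u = x ⬝ᵥ r := by
    intro x
    calc ρ.mulVec x ⬝ᵥ u = ρᵀ.mulVec u ⬝ᵥ x := by
          rw [dot_transpose', dotProduct_comm]
      _ = x ⬝ᵥ r := by rw [← hr, dotProduct_comm]
  have e5 : ∀ x : Fin n → ℝ, ρp.mulVec x ⬝ᵥ u = x ⬝ᵥ q := by
    intro x
    calc ρp.mulVec x ⬝ᵥ u = ρpᵀ.mulVec u ⬝ᵥ x := by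
          rw [dot_transpose', dotProduct_comm]
      _ = x ⬝ᵥ q := by rw [← hq, dotProduct_comm]
  have husq : u ⬝ᵥ u = w ⬝ᵥ a := by
    calc u ⬝ᵥ u = σᵀ.mulVec a ⬝ᵥ u := by rw [← hu]
      _ = a ⬝ᵥ σ.mulVec u := dot_transpose' _ _ _
      _ = a ⬝ᵥ w := by rw [hσu]
      _ = w ⬝ᵥ a := dotProduct_comm _ _
  have hrq : r ⬝ᵥ r + q ⬝ᵥ q = w ⬝ᵥ a := by
    have h1 : r ⬝ᵥ r = u ⬝ᵥ (ρ * ρᵀ).mulVec u := by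
      calc r ⬝ᵥ r = ρᵀ.mulVec u ⬝ᵥ r := by rw [← hr]
        _ = u ⬝ᵥ ρ.mulVec r := dot_transpose' _ _ _
        _ = u ⬝ᵥ (ρ * ρᵀ).mulVec u := by rw [hr, Matrix.mulVec_mulVec]
    have h2 : q ⬝ᵥ q = u ⬝ᵥ (ρp * ρpᵀ).mulVec u := by
      calc q ⬝ᵥ q = ρpᵀ.mulVec u ⬝ᵥ q := by rw [← hq]
        _ = u ⬝ᵥ ρp.mulVec q := dot_transpose' _ _ _
        _ = u ⬝ᵥ (ρp * ρpᵀ).mulVec u := by rw [hq, Matrix.mulVec_mulVec]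
    rw [h1, h2, ← dotProduct_add, ← Matrix.add_mulVec, hρ, Matrix.one_mulVec, husq]
  -- value at the optimum
  have e1 : ξs ⬝ᵥ ξs = z ⬝ᵥ z - 2 * (r ⬝ᵥ z) + r ⬝ᵥ r := by
    rw [hξs, sub_dotProduct, dotProduct_sub, dotProduct_sub, dotProduct_comm z r]; ring
  have e2 : ηs ⬝ᵥ ηs = q ⬝ᵥ q := by
    rw [hηs, neg_dotProduct, dotProduct_neg, neg_neg]
  have e3 : ξs ⬝ᵥ z = z ⬝ᵥ z - r ⬝ᵥ z := by rw [hξs, sub_dotProduct]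
  have hγ' : γ ≠ 0 := ne_of_gt hγ
  have hval : (1 / (2 * γ)) * (ξs ⬝ᵥ ξs + ηs ⬝ᵥ ηs) - (1 / γ) * (ξs ⬝ᵥ z) = mval := by
    rw [hm, e1, e2, e3]
    linear_combination (1 / (2 * γ)) * hrq
  refine ⟨hcs, hval, ⟨ξs, ηs, hcs, hval.symm⟩, ?_⟩
  rintro v ⟨ξ, η, hc, rfl⟩
  -- the key orthogonality identity
  have h6 : (σ * ρ).mulVec ξ + (σ * ρp).mulVec η = (σ * ρ).mulVec ξs + (σ * ρp).mulVec ηs := by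
    linear_combination hc - hcs
  have h7 : ρ.mulVec ξ + ρp.mulVec η = ρ.mulVec ξs + ρp.mulVec ηs := by
    have h8 := congrArg (fun v => σ⁻¹.mulVec v) h6
    simpa [Matrix.mulVec_add, Matrix.mulVec_mulVec, ← Matrix.mul_assoc, hσinv,
      Matrix.one_mul] using h8
  have hkey : ξ ⬝ᵥ r + η ⬝ᵥ q = ξs ⬝ᵥ r + ηs ⬝ᵥ q := by
    have h9 := congrArg (fun v => v ⬝ᵥ u) h7
    simp only [add_dotProduct] at h9
    rw [e4, e5, e4, e5] at h9
    exact h9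
  have hkey2 : ξ ⬝ᵥ ξs + η ⬝ᵥ ηs - ξ ⬝ᵥ z = ξs ⬝ᵥ ξs + ηs ⬝ᵥ ηs - ξs ⬝ᵥ z := by
    rw [hξs, hηs] at hkey ⊢
    simp only [dotProduct_sub, sub_dotProduct, dotProduct_neg, neg_dotProduct, neg_neg] at hkey ⊢
    linarith [hkey, dotProduct_comm r z, dotProduct_comm q q]
  have hd1 : (ξ - ξs) ⬝ᵥ (ξ - ξs) = ξ ⬝ᵥ ξ - 2 * (ξ ⬝ᵥ ξs) + ξs ⬝ᵥ ξs := by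
    rw [sub_dotProduct, dotProduct_sub, dotProduct_sub, dotProduct_comm ξs ξ]; ring
  have hd2 : (η - ηs) ⬝ᵥ (η - ηs) = η ⬝ᵥ η - 2 * (η ⬝ᵥ ηs) + ηs ⬝ᵥ ηs := by
    rw [sub_dotProduct, dotProduct_sub, dotProduct_sub, dotProduct_comm ηs η]; ring
  have hX : 0 ≤ (ξ - ξs) ⬝ᵥ (ξ - ξs) + (η - ηs) ⬝ᵥ (η - ηs) :=
    add_nonneg (dot_self_nonneg' _) (dot_self_nonneg' _)
  have hcpos : 0 < 1 / (2 * γ) := by positivity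
  have hmul := mul_nonneg hcpos.le hX
  have heq : (1 / (2 * γ)) * (ξ ⬝ᵥ ξ + η ⬝ᵥ η) - (1 / γ) * (ξ ⬝ᵥ z) - mval
      = (1 / (2 * γ)) * ((ξ - ξs) ⬝ᵥ (ξ - ξs) + (η - ηs) ⬝ᵥ (η - ηs)) := by
    rw [hd1, hd2, ← hval]
    linear_combination (1 / γ) * hkey2
  linarith [heq, hmul]
end

section
/- Let γ>1, let a,b,ℓ>0 satisfy bℓ > a²/2, let r₀, r₁ ∈ ℝ with r₁ ≥ 0, and let n ≥ 1, λ, ρ ∈ ℝ^n. Let Θ : (0,∞) → ℝ^{n×n} be a function such that the scalar functions q(x) := λᵀΘ(x)λ, m(x) := λᵀΘ(x)ρ and p(x) := ρᵀΘ(x)ρ are bounded on (0,∞), q(x) ≥ 0 for all x, and M̃(x) := 1 + ((1−γ)/γ)·p(x) > 0 for all x. Assume moreover that either r₁ > 0, or inf_{x>0} q(x) > 0. Then there exist constants c̲ > 0 and c̄ > 0 such that the function Φ : (0,∞) → ℝ given by Φ(x) := (a²/2)·x·(c̲/x²) + (bℓ − b·x + ((1−γ)/γ)·a·m(x)·x)·(−c̲/x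 + c̄) + (1/2)·M̃(x)·a²·x·(−c̲/x + c̄)² + (1−γ)(r₀ + r₁·x) + ((1−γ)/(2γ))·q(x)·x is bounded above on (0,∞). -/
open Matrix

lemma heston_aux (a b ℓ g t Mp Cm cl cu D mm S x : ℝ)
    (hx : 0 < x) (ha : 0 < a) (hb : 0 < b) (hg : 0 < g)
    (ht : 0 < t) (htM : t ≤ Mp)
    (hmm1 : -Cm ≤ mm) (hmm2 : mm ≤ Cm)
    (hS : S ≤ -D * x ^ 2)
    (hcl : 0 < cl) (hcl2 : a ^ 2 / 2 * Mp * cl ≤ b * ℓ - a ^ 2 / 2)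
    (hcu : 0 < cu) (hcu1 : cu ≤ 1)
    (hcu2 : g * a * Cm * cu + a ^ 2 / 2 * Mp * cu ≤ D) :
    a ^ 2 / 2 * cl + (b * ℓ - b * x + -g * a * mm * x) * (-cl + cu * x)
      + 1 / 2 * t * a ^ 2 * (-cl + cu * x) ^ 2 + S
      ≤ (b * ℓ * cu + b * cl + g * a * Cm * cl) * x := by
  nlinarith [mul_nonneg (mul_nonneg (mul_nonneg (mul_nonneg hg.le ha.le) hcl.le) (sub_nonneg.mpr hmm2)) hx.le,
    mul_nonneg (sub_nonneg.mpr htM) (mul_nonneg (sq_nonneg a) (sq_nonneg cl)),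
    mul_nonneg hcl.le (by nlinarith [mul_nonneg (sub_nonneg.mpr htM) (mul_nonneg (sq_nonneg a) hcl.le)] : (0:ℝ) ≤ b * ℓ - a ^ 2 / 2 - a ^ 2 / 2 * t * cl),
    mul_nonneg (mul_nonneg (mul_nonneg (mul_nonneg ht.le (sq_nonneg a)) hcl.le) hcu.le) hx.le,
    mul_nonneg (sq_nonneg x) (by linarith : (0:ℝ) ≤ D - g * a * Cm * cu - a ^ 2 / 2 * Mp * cu),
    mul_nonneg (mul_nonneg (mul_nonneg (mul_nonneg hg.le ha.le) hcu.le) (by linarith : (0:ℝ) ≤ Cm + mm)) (sq_nonneg x),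
    mul_nonneg (mul_nonneg (sub_nonneg.mpr htM) (mul_nonneg (sq_nonneg a) (sq_nonneg cu))) (sq_nonneg x),
    mul_nonneg (mul_nonneg (mul_nonneg (mul_nonneg (by linarith : (0:ℝ) ≤ 1 - cu) hcu.le) (by linarith : (0:ℝ) ≤ Mp)) (sq_nonneg a)) (sq_nonneg x),
    mul_nonneg (mul_nonneg hb.le hcu.le) (sq_nonneg x)]

lemma heston_pt (γ a b ℓ r₀ r₁ g Mp Cm D cl cu x mx px qx : ℝ)
    (hx : 0 < x) (ha : 0 < a) (hb : 0 < b) (hγ0 : 0 < γ)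
    (hg0 : 0 < g) (hgγ : (1 - γ) / γ = -g)
    (hmx1 : -Cm ≤ mx) (hmx2 : mx ≤ Cm)
    (ht : 0 < 1 + (1 - γ) / γ * px)
    (htM : 1 + (1 - γ) / γ * px ≤ Mp)
    (hD : (1 - γ) * (r₁ * x) + (1 - γ) / (2 * γ) * (qx * x) ≤ -D * x)
    (hcl : 0 < cl) (hcl2 : a ^ 2 / 2 * Mp * cl ≤ b * ℓ - a ^ 2 / 2)
    (hcu : 0 < cu) (hcu1 : cu ≤ 1)
    (hcu2 : g * a * Cm * cu + a ^ 2 / 2 * Mp * cu ≤ D) :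
    a ^ 2 / 2 * x * (cl / x ^ 2)
        + (b * ℓ - b * x + (1 - γ) / γ * a * mx * x) * (-cl / x + cu)
        + 1 / 2 * (1 + (1 - γ) / γ * px) * a ^ 2 * x * (-cl / x + cu) ^ 2
        + (1 - γ) * (r₀ + r₁ * x) + (1 - γ) / (2 * γ) * (qx * x)
      ≤ b * ℓ * cu + b * cl + g * a * Cm * cl + (1 - γ) * r₀ := by
  have hx0 : x ≠ 0 := hx.ne'
  have hS : (1 - γ) * (r₁ * x) * x + (1 - γ) / (2 * γ) * (qx * x) * x ≤ -D * x ^ 2 := by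
    have h := mul_le_mul_of_nonneg_right hD hx.le
    have h2 : (1 - γ) * (r₁ * x) * x + (1 - γ) / (2 * γ) * (qx * x) * x
        = ((1 - γ) * (r₁ * x) + (1 - γ) / (2 * γ) * (qx * x)) * x := by ring
    rw [h2]
    exact h.trans_eq (by ring)
  have haux := heston_aux a b ℓ g (1 + (1 - γ) / γ * px) Mp Cm cl cu D mx
    ((1 - γ) * (r₁ * x) * x + (1 - γ) / (2 * γ) * (qx * x) * x) x
    hx ha hb hg0 ht htM hmx1 hmx2 hS hcl hcl2 hcu hcu1 hcu2
  have hEP : (a ^ 2 / 2 * x * (cl / x ^ 2)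
        + (b * ℓ - b * x + (1 - γ) / γ * a * mx * x) * (-cl / x + cu)
        + 1 / 2 * (1 + (1 - γ) / γ * px) * a ^ 2 * x * (-cl / x + cu) ^ 2
        + (1 - γ) * (r₀ + r₁ * x) + (1 - γ) / (2 * γ) * (qx * x)) * x
      = a ^ 2 / 2 * cl + (b * ℓ - b * x + -g * a * mx * x) * (-cl + cu * x)
        + 1 / 2 * (1 + (1 - γ) / γ * px) * a ^ 2 * (-cl + cu * x) ^ 2
        + ((1 - γ) * (r₁ * x) * x + (1 - γ) / (2 * γ) * (qx * x) * x)
        + (1 - γ) * r₀ * x := by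
    rw [← hgγ]
    field_simp
    ring
  have hfin : (a ^ 2 / 2 * x * (cl / x ^ 2)
        + (b * ℓ - b * x + (1 - γ) / γ * a * mx * x) * (-cl / x + cu)
        + 1 / 2 * (1 + (1 - γ) / γ * px) * a ^ 2 * x * (-cl / x + cu) ^ 2
        + (1 - γ) * (r₀ + r₁ * x) + (1 - γ) / (2 * γ) * (qx * x)) * x
      ≤ (b * ℓ * cu + b * cl + g * a * Cm * cl + (1 - γ) * r₀) * x := by
    rw [hEP]; nlinarith [haux]
  exact le_of_mul_le_mul_right hfin hx

/-- Lyapunov function for the Heston-type model: under the stated conditions there exist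
constants `c̲, c̄ > 0` such that
`Φ(x) = (a²/2)x(c̲/x²) + (bℓ − bx + ((1−γ)/γ)a m(x) x)(−c̲/x + c̄)
 + ½ M̃(x) a² x (−c̲/x + c̄)² + (1−γ)(r₀ + r₁x) + ((1−γ)/(2γ)) q(x) x`
is bounded above on `(0,∞)`. -/
theorem heston_lyapunov_bounded_above
    (γ : ℝ) (hγ : 1 < γ) (a b ℓ : ℝ) (ha : 0 < a) (hb : 0 < b) (hℓ : 0 < ℓ)
    (hbl : a ^ 2 / 2 < b * ℓ) (r₀ r₁ : ℝ) (hr₁ : 0 ≤ r₁)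
    (n : ℕ) (hn : 1 ≤ n) (lam ρ : Fin n → ℝ)
    (Θ : ℝ → Matrix (Fin n) (Fin n) ℝ)
    (q m p : ℝ → ℝ)
    (hq : ∀ x : ℝ, q x = lam ⬝ᵥ (Θ x).mulVec lam)
    (hm : ∀ x : ℝ, m x = lam ⬝ᵥ (Θ x).mulVec ρ)
    (hp : ∀ x : ℝ, p x = ρ ⬝ᵥ (Θ x).mulVec ρ)
    (hqbd : ∃ C : ℝ, ∀ x > (0 : ℝ), |q x| ≤ C)
    (hmbd : ∃ C : ℝ, ∀ x > (0 : ℝ), |m x| ≤ C)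
    (hpbd : ∃ C : ℝ, ∀ x > (0 : ℝ), |p x| ≤ C)
    (hq0 : ∀ x : ℝ, 0 ≤ q x)
    (hM : ∀ x : ℝ, 0 < 1 + (1 - γ) / γ * p x)
    (hpos : 0 < r₁ ∨ ∃ ε > (0 : ℝ), ∀ x > (0 : ℝ), ε ≤ q x) :
    ∃ cl > (0 : ℝ), ∃ cu > (0 : ℝ), ∃ K : ℝ, ∀ x > (0 : ℝ),
      a ^ 2 / 2 * x * (cl / x ^ 2)
        + (b * ℓ - b * x + (1 - γ) / γ * a * m x * x) * (-cl / x + cu)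
        + 1 / 2 * (1 + (1 - γ) / γ * p x) * a ^ 2 * x * (-cl / x + cu) ^ 2
        + (1 - γ) * (r₀ + r₁ * x) + (1 - γ) / (2 * γ) * (q x * x) ≤ K := by
  clear hq hm hp hqbd hn
  clear Θ lam ρ n
  obtain ⟨Cm, hCm⟩ := hmbd
  obtain ⟨Cp, hCp⟩ := hpbd
  have hγ0 : (0:ℝ) < γ := by linarith
  have hCm0 : 0 ≤ Cm := le_trans (abs_nonneg _) (hCm 1 one_pos)
  have hCp0 : 0 ≤ Cp := le_trans (abs_nonneg _) (hCp 1 one_pos)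
  obtain ⟨g, hg0, hgγ⟩ : ∃ g : ℝ, 0 < g ∧ (1 - γ) / γ = -g :=
    ⟨(γ - 1) / γ, div_pos (by linarith) hγ0, by ring⟩
  obtain ⟨Mp, hMpdef⟩ : ∃ Mp : ℝ, Mp = 1 + g * Cp := ⟨_, rfl⟩
  have hMp1 : (1:ℝ) ≤ Mp := by rw [hMpdef]; nlinarith
  -- the drift constant D
  obtain ⟨D, hD0, hDle⟩ : ∃ D : ℝ, 0 < D ∧ ∀ x > (0:ℝ),
      (1 - γ) * (r₁ * x) + (1 - γ) / (2 * γ) * (q x * x) ≤ -D * x := by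
    rcases hpos with hr | ⟨ε, hε, hqε⟩
    · refine ⟨(γ - 1) * r₁, by nlinarith, fun x hx => ?_⟩
      have hc : (1 - γ) / (2 * γ) ≤ 0 :=
        div_nonpos_of_nonpos_of_nonneg (by linarith) (by linarith)
      have h2 : (1 - γ) / (2 * γ) * (q x * x) ≤ 0 :=
        mul_nonpos_of_nonpos_of_nonneg hc (mul_nonneg (hq0 x) hx.le)
      nlinarith [h2]
    · refine ⟨(γ - 1) / (2 * γ) * ε, mul_pos (div_pos (by linarith) (by linarith)) hε,
        fun x hx => ?_⟩
      have hc : (1 - γ) / (2 * γ) ≤ 0 :=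
        div_nonpos_of_nonpos_of_nonneg (by linarith) (by linarith)
      have h1 : (1 - γ) * (r₁ * x) ≤ 0 :=
        mul_nonpos_of_nonpos_of_nonneg (by linarith) (mul_nonneg hr₁ hx.le)
      have h2 : (1 - γ) / (2 * γ) * (q x * x) ≤ (1 - γ) / (2 * γ) * (ε * x) :=
        mul_le_mul_of_nonpos_left (mul_le_mul_of_nonneg_right (hqε x hx) hx.le) hc
      have h3 : (1 - γ) / (2 * γ) * (ε * x) = -((γ - 1) / (2 * γ) * ε) * x := by ring
      linarith [h2.trans_eq h3]
  -- constants cl, cu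
  have hden1 : (0:ℝ) < a ^ 2 / 2 * Mp + 1 := by nlinarith [sq_nonneg a]
  obtain ⟨cl, hcldef⟩ : ∃ cl : ℝ, cl = (b * ℓ - a ^ 2 / 2) / (a ^ 2 / 2 * Mp + 1) := ⟨_, rfl⟩
  have hcl0 : 0 < cl := by rw [hcldef]; exact div_pos (by linarith) hden1
  have hcl2 : a ^ 2 / 2 * Mp * cl ≤ b * ℓ - a ^ 2 / 2 := by
    have hcle : cl * (a ^ 2 / 2 * Mp + 1) = b * ℓ - a ^ 2 / 2 := by
      rw [hcldef]; exact div_mul_cancel₀ _ hden1.ne'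
    nlinarith
  have hden2 : (0:ℝ) < g * a * Cm + a ^ 2 / 2 * Mp + 1 := by
    nlinarith [mul_nonneg (mul_nonneg hg0.le ha.le) hCm0, sq_nonneg a]
  obtain ⟨cu, hcudef⟩ : ∃ cu : ℝ,
      cu = min 1 (D / (g * a * Cm + a ^ 2 / 2 * Mp + 1)) := ⟨_, rfl⟩
  have hcu0 : 0 < cu := by rw [hcudef]; exact lt_min one_pos (div_pos hD0 hden2)
  have hcu1 : cu ≤ 1 := by rw [hcudef]; exact min_le_left _ _
  have hcu2 : g * a * Cm * cu + a ^ 2 / 2 * Mp * cu ≤ D := by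
    have h : cu ≤ D / (g * a * Cm + a ^ 2 / 2 * Mp + 1) := by rw [hcudef]; exact min_le_right _ _
    have h' : cu * (g * a * Cm + a ^ 2 / 2 * Mp + 1) ≤ D := by
      rw [← le_div_iff₀ hden2]; exact h
    nlinarith
  refine ⟨cl, hcl0, cu, hcu0, b * ℓ * cu + b * cl + g * a * Cm * cl + (1 - γ) * r₀,
    fun x hx => ?_⟩
  have hmx := abs_le.mp (hCm x hx)
  have hpx := abs_le.mp (hCp x hx)
  have htM : 1 + (1 - γ) / γ * p x ≤ Mp := by
    rw [hMpdef, hgγ]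
    nlinarith [hpx.1, hpx.2]
  exact heston_pt γ a b ℓ r₀ r₁ g Mp Cm D cl cu x (m x) (p x) (q x)
    hx ha hb hγ0 hg0 hgγ hmx.1 hmx.2 (hM x) htM (hDle x hx)
    hcl0 hcl2 hcu0 hcu1 hcu2
end
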